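/- Let Λ1 = {v + (1/2)(1,1,1,1,1,1,1,1) : v ∈ ℤ^8, v1+...+v8 even} (equivalently, all vectors with strictly half-integer coordinates whose sum is even), and let λ°=ε1+ε2=(1,1,0,0,0,0,0,0). For every λ ∈ Λ1, one has λ° ∈ M_E8(λ). -/

import Mathlib

namespace TorusNormal

/-- `V n` is the rational vector space `ℚ^n`. -/
abbrev V (n : ℕ) := Fin n → ℚ

/-- The standard scalar product on `ℚ^n`. -/
def dot {n : ℕ} (x y : V n) : ℚ := ∑ i, x i * y i

lemma dot_add_right {n : ℕ} (α x y : V n) : dot α (x + y) = dot α x + dot α y := by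
  simp [dot, mul_add, Finset.sum_add_distrib]

lemma dot_smul_right {n : ℕ} (α : V n) (c : ℚ) (x : V n) : dot α (c • x) = c * dot α x := by
  simp [dot, Finset.mul_sum, mul_left_comm]

/-- The reflection `s_α : x ↦ x - (2(α,x)/(α,α))·α`, as a linear map. -/
def reflLin {n : ℕ} (α : V n) : V n →ₗ[ℚ] V n where
  toFun x := x - ((2 * dot α x) / dot α α) • α
  map_add' x y := by
    rw [dot_add_right,
      show (2 * (dot α x + dot α y)) / dot α α
        = (2 * dot α x) / dot α α + (2 * dot α y) / dot α α by ring, add_smul]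
    abel
  map_smul' c x := by
    rw [dot_smul_right]
    simp only [RingHom.id_apply]
    rw [smul_sub, smul_smul]
    congr 1
    congr 1
    ring

/-- The Weyl group of a root system `Φ`: the subgroup of `GL(ℚ^n)` generated by the
reflections `s_α`, `α ∈ Φ`. -/
def weylGroup {n : ℕ} (Φ : Set (V n)) : Subgroup (Module.End ℚ (V n))ˣ :=
  Subgroup.closure {g | ∃ α ∈ Φ, g.val = reflLin α}

/-- The orbit of `l` under the Weyl group of `Φ`. -/
def weylOrbit {n : ℕ} (Φ : Set (V n)) (l : V n) : Set (V n) :=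
  {x | ∃ g ∈ weylGroup Φ, x = g.val l}

/-- The weight polytope `P(λ)`: the convex hull of the Weyl orbit of `λ`. -/
def weightPolytope {n : ℕ} (Φ : Set (V n)) (l : V n) : Set (V n) :=
  convexHull ℚ (weylOrbit Φ l)

/-- `M(λ) = (λ + Ξ) ∩ P(λ)`, where `Ξ` is the root lattice (the ℤ-span of `Φ`). -/
def Mset {n : ℕ} (Φ : Set (V n)) (l : V n) : Set (V n) :=
  {x | x - l ∈ Submodule.span ℤ Φ ∧ x ∈ weightPolytope Φ l}

/-- `v` is a ℚ≥0-linear combination of elements of `S`. -/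
def InCone {n : ℕ} (S : Set (V n)) (v : V n) : Prop :=
  ∃ (t : Finset (V n)) (c : V n → ℚ),
    ↑t ⊆ S ∧ (∀ x ∈ t, 0 ≤ c x) ∧ v = ∑ x ∈ t, c x • x

/-- A set `S ⊆ ℚ^n` is saturated if every vector in the intersection of the ℤ-linear span
of `S` with the ℚ≥0-cone of `S` is a ℤ≥0-linear combination of elements of `S`
(equivalently, lies in the additive submonoid generated by `S`). -/
def IsSaturated {n : ℕ} (S : Set (V n)) : Prop :=
  ∀ v : V n, v ∈ Submodule.span ℤ S → InCone S v → v ∈ AddSubmonoid.closure S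

/-- A set is hereditarily normal if every subset is saturated. -/
def HereditarilyNormal {n : ℕ} (S : Set (V n)) : Prop :=
  ∀ T : Set (V n), T ⊆ S → IsSaturated T


/-- The root system `E₈` in `ℚ^8`: the vectors `±εᵢ±εⱼ` (`i ≠ j`) together with the
vectors `(1/2)·Σ (-1)^{νᵢ} εᵢ` with an even number of minus signs. -/
def e8roots : Set (V 8) :=
  {x | (∃ i j : Fin 8, i ≠ j ∧ ∃ a b : ℚ, (a = 1 ∨ a = -1) ∧ (b = 1 ∨ b = -1) ∧
          x = a • (Pi.single i 1 : V 8) + b • (Pi.single j 1 : V 8)) ∨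
       (∃ s : Fin 8 → ℚ, (∀ i, s i = 1 ∨ s i = -1) ∧
          Even (Finset.univ.filter (fun i => s i = -1)).card ∧ x = (2⁻¹ : ℚ) • s)}

/-- `Λ₀`: the integer vectors in `ℚ^8` whose coordinate sum is even. -/
def LambdaZero : Set (V 8) :=
  {v | (∀ i, ∃ m : ℤ, v i = (m : ℚ)) ∧ ∃ m : ℤ, (∑ i, v i) = 2 * (m : ℚ)}

/-- `Λ₁ = Λ₀ + (1/2)(1,1,1,1,1,1,1,1)`. -/
def LambdaOne : Set (V 8) :=
  {v | ∃ w ∈ LambdaZero, v = w + fun _ => (1 / 2 : ℚ)}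

/-- `λ° = ε₁ + ε₂`. -/
def lamCirc : V 8 := ![1, 1, 0, 0, 0, 0, 0, 0]

-- ===== aux =====
lemma dot_sub_right {n : ℕ} (α x y : V n) : dot α (x - y) = dot α x - dot α y := by
  simp [dot, mul_sub, Finset.sum_sub_distrib]

lemma reflLin_apply {n : ℕ} (α x : V n) :
    reflLin α x = x - ((2 * dot α x) / dot α α) • α := rfl

lemma reflLin_invol {n : ℕ} (α : V n) (h : dot α α ≠ 0) (x : V n) :
    reflLin α (reflLin α x) = x := by
  rw [reflLin_apply, reflLin_apply, dot_sub_right, dot_smul_right]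
  have : (2 * (dot α x - 2 * dot α x / dot α α * dot α α)) / dot α α
      = -((2 * dot α x) / dot α α) := by field_simp; ring
  rw [this]
  module

def reflUnit {n : ℕ} (α : V n) (h : dot α α ≠ 0) : (Module.End ℚ (V n))ˣ where
  val := reflLin α
  inv := reflLin α
  val_inv := LinearMap.ext fun x => reflLin_invol α h x
  inv_val := LinearMap.ext fun x => reflLin_invol α h x

lemma reflUnit_mem {n : ℕ} {Φ : Set (V n)} {α : V n} (h : dot α α ≠ 0) (hα : α ∈ Φ) :
    reflUnit α h ∈ weylGroup Φ :=
  Subgroup.subset_closure ⟨α, hα, rfl⟩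

lemma orbit_self {n : ℕ} (Φ : Set (V n)) (l : V n) : l ∈ weylOrbit Φ l :=
  ⟨1, one_mem _, by simp⟩

lemma orbit_smul {n : ℕ} {Φ : Set (V n)} {l x : V n} {g : (Module.End ℚ (V n))ˣ}
    (hg : g ∈ weylGroup Φ) (hx : x ∈ weylOrbit Φ l) : g.val x ∈ weylOrbit Φ l := by
  obtain ⟨g', hg', rfl⟩ := hx
  exact ⟨g * g', mul_mem hg hg', by simp [Units.val_mul, Module.End.mul_apply]⟩

lemma conv_smul {n : ℕ} {Φ : Set (V n)} {l x : V n} {g : (Module.End ℚ (V n))ˣ}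
    (hg : g ∈ weylGroup Φ) (hx : x ∈ convexHull ℚ (weylOrbit Φ l)) :
    g.val x ∈ convexHull ℚ (weylOrbit Φ l) := by
  have hsub : convexHull ℚ (weylOrbit Φ l) ⊆ g.val ⁻¹' (convexHull ℚ (weylOrbit Φ l)) := by
    apply convexHull_min
    · intro y hy
      exact subset_convexHull ℚ _ (orbit_smul hg hy)
    · exact (convex_convexHull ℚ _).linear_preimage g.val
  exact hsub hx

lemma conv_comb {n : ℕ} {C : Set (V n)} (hC : Convex ℚ C) {x y : V n} (hx : x ∈ C)
    (hy : y ∈ C) {t : ℚ} (h0 : 0 ≤ t) (h1 : t ≤ 1) : t • x + (1 - t) • y ∈ C :=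
  hC hx hy h0 (by linarith) (by ring)



-- ===== specific roots =====

/-- standard basis vector -/
def ee (i : Fin 8) : V 8 := Pi.single i 1

lemma dot_ee_left (i : Fin 8) (x : V 8) : dot (ee i) x = x i := by
  simp [dot, ee, Pi.single_apply, Finset.sum_ite_eq']

lemma dot_sub_left {n : ℕ} (x y α : V n) : dot (x - y) α = dot x α - dot y α := by
  simp [dot, sub_mul, Finset.sum_sub_distrib]

lemma dot_add_left {n : ℕ} (x y α : V n) : dot (x + y) α = dot x α + dot y α := by
  simp [dot, add_mul, Finset.sum_add_distrib]

lemma dot_comm {n : ℕ} (x y : V n) : dot x y = dot y x := by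
  simp [dot, mul_comm]

lemma dot_ee_right (i : Fin 8) (x : V 8) : dot x (ee i) = x i := by
  rw [dot_comm, dot_ee_left]

lemma ee_apply_same (i : Fin 8) : ee i i = 1 := Pi.single_eq_same i 1

lemma ee_apply_ne {i k : Fin 8} (h : k ≠ i) : ee i k = 0 := Pi.single_eq_of_ne h 1

lemma root_sub {i j : Fin 8} (hij : i ≠ j) : ee i - ee j ∈ e8roots := by
  left
  exact ⟨i, j, hij, 1, -1, Or.inl rfl, Or.inr rfl, by
    simp [ee, sub_eq_add_neg, neg_smul]⟩

lemma root_add {i j : Fin 8} (hij : i ≠ j) : ee i + ee j ∈ e8roots := by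
  left
  exact ⟨i, j, hij, 1, 1, Or.inl rfl, Or.inl rfl, by simp [ee]⟩

lemma dot_sub_self {i j : Fin 8} (hij : i ≠ j) : dot (ee i - ee j) (ee i - ee j) = 2 := by
  rw [dot_sub_right, dot_sub_left, dot_sub_left, dot_ee_left, dot_ee_left,
    dot_ee_right, dot_ee_right, ee_apply_same, ee_apply_same,
    ee_apply_ne hij.symm]
  norm_num

lemma dot_add_self {i j : Fin 8} (hij : i ≠ j) : dot (ee i + ee j) (ee i + ee j) = 2 := by
  rw [dot_add_right, dot_add_left, dot_add_left, dot_ee_left, dot_ee_left,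
    dot_ee_right, dot_ee_right, ee_apply_same, ee_apply_same,
    ee_apply_ne hij.symm]
  norm_num

/-- swap unit -/
def swapU (i j : Fin 8) (hij : i ≠ j) : (Module.End ℚ (V 8))ˣ :=
  reflUnit (ee i - ee j) (by rw [dot_sub_self hij]; norm_num)

def nswapU (i j : Fin 8) (hij : i ≠ j) : (Module.End ℚ (V 8))ˣ :=
  reflUnit (ee i + ee j) (by rw [dot_add_self hij]; norm_num)

lemma swapU_mem {i j : Fin 8} (hij : i ≠ j) : swapU i j hij ∈ weylGroup e8roots :=
  reflUnit_mem _ (root_sub hij)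

lemma nswapU_mem {i j : Fin 8} (hij : i ≠ j) : nswapU i j hij ∈ weylGroup e8roots :=
  reflUnit_mem _ (root_add hij)

lemma swapU_apply {i j : Fin 8} (hij : i ≠ j) (x : V 8) (k : Fin 8) :
    ((swapU i j hij).val x) k = if k = i then x j else if k = j then x i else x k := by
  show (reflLin (ee i - ee j) x) k = _
  rw [reflLin_apply, dot_sub_left, dot_ee_left, dot_ee_left, dot_sub_self hij]
  have : (2 * (x i - x j)) / 2 = x i - x j := by ring
  rw [this]
  simp only [Pi.sub_apply, Pi.smul_apply, smul_eq_mul]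
  rcases eq_or_ne k i with rfl | hki
  · rw [if_pos rfl, ee_apply_same, ee_apply_ne hij]; ring
  · rw [if_neg hki]
    rcases eq_or_ne k j with rfl | hkj
    · rw [if_pos rfl, ee_apply_same, ee_apply_ne hij.symm]; ring
    · rw [if_neg hkj, ee_apply_ne hki, ee_apply_ne hkj]; ring

lemma nswapU_apply {i j : Fin 8} (hij : i ≠ j) (x : V 8) (k : Fin 8) :
    ((nswapU i j hij).val x) k = if k = i then -x j else if k = j then -x i else x k := by
  show (reflLin (ee i + ee j) x) k = _
  rw [reflLin_apply, dot_add_left, dot_ee_left, dot_ee_left, dot_add_self hij]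
  have : (2 * (x i + x j)) / 2 = x i + x j := by ring
  rw [this]
  simp only [Pi.sub_apply, Pi.add_apply, Pi.smul_apply, smul_eq_mul]
  rcases eq_or_ne k i with rfl | hki
  · rw [if_pos rfl, ee_apply_same, ee_apply_ne hij]; ring
  · rw [if_neg hki]
    rcases eq_or_ne k j with rfl | hkj
    · rw [if_pos rfl, ee_apply_same, ee_apply_ne hij.symm]; ring
    · rw [if_neg hkj, ee_apply_ne hki, ee_apply_ne hkj]; ring

/-- flip unit: negates coordinates i and j -/
def flipU (i j : Fin 8) (hij : i ≠ j) : (Module.End ℚ (V 8))ˣ :=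
  nswapU i j hij * swapU i j hij

lemma flipU_mem {i j : Fin 8} (hij : i ≠ j) : flipU i j hij ∈ weylGroup e8roots :=
  mul_mem (nswapU_mem hij) (swapU_mem hij)

lemma flipU_apply {i j : Fin 8} (hij : i ≠ j) (x : V 8) (k : Fin 8) :
    ((flipU i j hij).val x) k = if k = i then -x i else if k = j then -x j else x k := by
  show ((nswapU i j hij).val * (swapU i j hij).val) x k = _
  rw [Module.End.mul_apply, nswapU_apply hij]
  rcases eq_or_ne k i with rfl | hki
  · rw [if_pos rfl, if_pos rfl, swapU_apply hij, if_neg hij.symm, if_pos rfl]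
  · rw [if_neg hki, if_neg hki]
    rcases eq_or_ne k j with rfl | hkj
    · rw [if_pos rfl, if_pos rfl, swapU_apply hij, if_pos rfl]
    · rw [if_neg hkj, if_neg hkj, swapU_apply hij, if_neg hki, if_neg hkj]


-- ===== lattice =====

lemma half_root : (fun _ => (1/2 : ℚ)) ∈ e8roots := by
  right
  refine ⟨fun _ => 1, fun i => Or.inl rfl, ?_, ?_⟩
  · have : (Finset.univ.filter (fun i : Fin 8 => (1:ℚ) = -1)) = ∅ :=
      Finset.filter_false_of_mem (fun i _ => by norm_num)
    rw [this]
    simp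
  · funext k; norm_num

lemma int_even_mem_span (nI : Fin 8 → ℤ) (m : ℤ) (hsum : (∑ i, nI i) = 2 * m) :
    (fun i => (nI i : ℚ)) ∈ Submodule.span ℤ e8roots := by
  have hmem : ∀ (i j : Fin 8), i ≠ j → (ee i - ee j) ∈ Submodule.span ℤ e8roots :=
    fun i j hij => Submodule.subset_span (root_sub hij)
  have hmem' : (ee 0 + ee 1) ∈ Submodule.span ℤ e8roots :=
    Submodule.subset_span (root_add (by decide))
  have key : (fun i => (nI i : ℚ)) =
      nI 1 • (ee 1 - ee 0) + nI 2 • (ee 2 - ee 0) + nI 3 • (ee 3 - ee 0) +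
      nI 4 • (ee 4 - ee 0) + nI 5 • (ee 5 - ee 0) + nI 6 • (ee 6 - ee 0) +
      nI 7 • (ee 7 - ee 0) + m • ((ee 0 + ee 1) - (ee 1 - ee 0)) := by
    have hs := hsum
    rw [Fin.sum_univ_eight] at hs
    funext k
    fin_cases k <;>
      simp (config := { decide := true }) [ee, Pi.single_apply, zsmul_eq_mul] <;>
      push_cast <;> first
        | (have h8 : ((nI 0 : ℤ) : ℚ) + nI 1 + nI 2 + nI 3 + nI 4 + nI 5 + nI 6 + nI 7
              = 2 * m := by exact_mod_cast hs
           linarith)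
        | ring
  rw [key]
  refine Submodule.add_mem _ ?_
    (Submodule.smul_mem _ _ (Submodule.sub_mem _ hmem' (hmem 1 0 (by decide))))
  refine Submodule.add_mem _ (Submodule.add_mem _ (Submodule.add_mem _
    (Submodule.add_mem _ (Submodule.add_mem _ (Submodule.add_mem _ ?_ ?_) ?_) ?_) ?_) ?_) ?_ <;>
    exact Submodule.smul_mem _ _ (hmem _ _ (by decide))


-- ===== case B core =====

lemma Bcore (l : V 8) (c : ℚ) (x : V 8) (hxC : x ∈ convexHull ℚ (weylOrbit e8roots l))
    (hc : x 0 + x 1 = c + c) (hc1 : 1 ≤ |c|) :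
    lamCirc ∈ convexHull ℚ (weylOrbit e8roots l) := by
  have h23 : ((2:Fin 8) ≠ 3) := by decide
  have h45 : ((4:Fin 8) ≠ 5) := by decide
  have h67 : ((6:Fin 8) ≠ 7) := by decide
  have h01 : ((0:Fin 8) ≠ 1) := by decide
  have hC : Convex ℚ (convexHull ℚ (weylOrbit e8roots l)) := convex_convexHull ℚ _
  have hm : ∀ y z : V 8, y ∈ convexHull ℚ (weylOrbit e8roots l) →
      z ∈ convexHull ℚ (weylOrbit e8roots l) →
      (2⁻¹:ℚ) • y + (2⁻¹:ℚ) • z ∈ convexHull ℚ (weylOrbit e8roots l) :=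
    fun y z hy hz => hC hy hz (by norm_num) (by norm_num) (by norm_num)
  set y1 : V 8 := (2⁻¹:ℚ) • x + (2⁻¹:ℚ) • ((flipU 2 3 h23).val x) with hy1
  have hy1C : y1 ∈ convexHull ℚ (weylOrbit e8roots l) :=
    hm _ _ hxC (conv_smul (flipU_mem h23) hxC)
  have hy1v : ∀ k, y1 k = if k = 2 then 0 else if k = 3 then 0 else x k := by
    intro k
    rw [hy1]
    simp only [Pi.add_apply, Pi.smul_apply, smul_eq_mul, flipU_apply h23]
    rcases eq_or_ne k 2 with rfl | hk2
    · rw [if_pos rfl, if_pos rfl]; ring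
    · rw [if_neg hk2, if_neg hk2]
      rcases eq_or_ne k 3 with rfl | hk3
      · rw [if_pos rfl, if_pos rfl]; ring
      · rw [if_neg hk3, if_neg hk3]; ring
  set y2 : V 8 := (2⁻¹:ℚ) • y1 + (2⁻¹:ℚ) • ((flipU 4 5 h45).val y1) with hy2
  have hy2C : y2 ∈ convexHull ℚ (weylOrbit e8roots l) :=
    hm _ _ hy1C (conv_smul (flipU_mem h45) hy1C)
  have hy2v : ∀ k, y2 k = if k = 2 then 0 else if k = 3 then 0 else
      if k = 4 then 0 else if k = 5 then 0 else x k := by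
    intro k
    rw [hy2]
    simp only [Pi.add_apply, Pi.smul_apply, smul_eq_mul, flipU_apply h45]
    rcases eq_or_ne k 4 with rfl | hk4
    · rw [if_pos rfl, hy1v 4]
      simp (config := { decide := true })
      try ring
    · rw [if_neg hk4]
      rcases eq_or_ne k 5 with rfl | hk5
      · rw [if_pos rfl, hy1v 5]
        simp (config := { decide := true })
        try ring
      · rw [if_neg hk5, hy1v k]
        rcases eq_or_ne k 2 with rfl | hk2
        · rw [if_pos rfl, if_pos rfl]; ring
        · rw [if_neg hk2, if_neg hk2]
          rcases eq_or_ne k 3 with rfl | hk3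
          · rw [if_pos rfl, if_pos rfl]; ring
          · rw [if_neg hk3, if_neg hk3, if_neg hk4, if_neg hk5]; ring
  set y3 : V 8 := (2⁻¹:ℚ) • y2 + (2⁻¹:ℚ) • ((flipU 6 7 h67).val y2) with hy3
  have hy3C : y3 ∈ convexHull ℚ (weylOrbit e8roots l) :=
    hm _ _ hy2C (conv_smul (flipU_mem h67) hy2C)
  have hy3v : ∀ k, y3 k = if k = 0 then x 0 else if k = 1 then x 1 else 0 := by
    intro k
    rw [hy3]
    simp only [Pi.add_apply, Pi.smul_apply, smul_eq_mul, flipU_apply h67]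
    rcases eq_or_ne k 6 with rfl | hk6
    · rw [if_pos rfl, hy2v 6]
      simp (config := { decide := true })
      try ring
    · rw [if_neg hk6]
      rcases eq_or_ne k 7 with rfl | hk7
      · rw [if_pos rfl, hy2v 7]
        simp (config := { decide := true })
        try ring
      · rw [if_neg hk7, hy2v k]
        rcases eq_or_ne k 0 with rfl | hk0
        · simp (config := { decide := true })
          try ring
        · rw [if_neg hk0]
          rcases eq_or_ne k 1 with rfl | hk1
          · simp (config := { decide := true })
            try ring
          · rw [if_neg hk1]
            have hk2 : k = 2 ∨ k = 3 ∨ k = 4 ∨ k = 5 := by omega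
            rcases hk2 with rfl | rfl | rfl | rfl <;>
              simp (config := { decide := true }) <;> try ring
  set u : V 8 := (2⁻¹:ℚ) • y3 + (2⁻¹:ℚ) • ((swapU 0 1 h01).val y3) with hu
  have huC : u ∈ convexHull ℚ (weylOrbit e8roots l) :=
    hm _ _ hy3C (conv_smul (swapU_mem h01) hy3C)
  have huv : ∀ k, u k = if k = 0 then c else if k = 1 then c else 0 := by
    intro k
    rw [hu]
    simp only [Pi.add_apply, Pi.smul_apply, smul_eq_mul, swapU_apply h01]
    rcases eq_or_ne k 0 with rfl | hk0
    · rw [if_pos rfl, if_pos rfl, hy3v 0, hy3v 1]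
      simp (config := { decide := true })
      linarith
    · rw [if_neg hk0, if_neg hk0]
      rcases eq_or_ne k 1 with rfl | hk1
      · rw [if_pos rfl, if_pos rfl, hy3v 0, hy3v 1]
        simp (config := { decide := true })
        linarith
      · rw [if_neg hk1, if_neg hk1, hy3v k, if_neg hk0, if_neg hk1]
        ring
  set u' : V 8 := (flipU 0 1 h01).val u with hu'
  have hu'C : u' ∈ convexHull ℚ (weylOrbit e8roots l) := conv_smul (flipU_mem h01) huC
  have hu'v : ∀ k, u' k = if k = 0 then -c else if k = 1 then -c else 0 := by
    intro k
    rw [hu', flipU_apply h01]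
    rcases eq_or_ne k 0 with rfl | hk0
    · rw [if_pos rfl, if_pos rfl, huv 0, if_pos rfl]
    · rw [if_neg hk0, if_neg hk0]
      rcases eq_or_ne k 1 with rfl | hk1
      · rw [if_pos rfl, if_pos rfl, huv 1, if_neg h01.symm, if_pos rfl]
      · rw [if_neg hk1, if_neg hk1, huv k, if_neg hk0, if_neg hk1]
  have hc0 : c ≠ 0 := by
    intro h
    rw [h] at hc1
    norm_num at hc1
  set t : ℚ := (c + 1) / (2 * c) with ht
  have htt : 0 ≤ t ∧ t ≤ 1 := by
    rcases abs_cases c with ⟨habs, hpos⟩ | ⟨habs, hneg⟩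
    · have h1c : 1 ≤ c := by rw [habs] at hc1; exact hc1
      constructor
      · positivity
      · rw [ht, div_le_one (by linarith)]
        linarith
    · have h1c : c ≤ -1 := by rw [habs] at hc1; linarith
      constructor
      · rw [ht]
        exact div_nonneg_iff.2 (Or.inr ⟨by linarith, by linarith⟩)
      · have hsub : t - 1 = (1 - c) / (2 * c) := by
          rw [ht]; field_simp; ring
        have : t - 1 ≤ 0 := by
          rw [hsub]
          exact div_nonpos_iff.2 (Or.inl ⟨by linarith, by linarith⟩)
        linarith
  have hfinal := hC huC hu'C htt.1 (by linarith [htt.2] : (0:ℚ) ≤ 1 - t) (by ring)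
  have hkey : lamCirc = t • u + (1 - t) • u' := by
    funext k
    rw [Pi.add_apply, Pi.smul_apply, Pi.smul_apply, smul_eq_mul, smul_eq_mul]
    fin_cases k <;>
      rw [huv, hu'v] <;>
      simp (config := { decide := true }) only [lamCirc, ht, Matrix.cons_val_zero,
        Matrix.cons_val_one, Matrix.head_cons, Matrix.cons_val_fin_one] <;>
      norm_num <;>
      field_simp <;>
      ring
  rw [hkey]
  exact hfinal


-- ===== case A core =====

lemma lamCirc_0 : lamCirc 0 = 1 := rfl
lemma lamCirc_1 : lamCirc 1 = 1 := rfl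
lemma lamCirc_other {i : Fin 8} (h0 : i ≠ 0) (h1 : i ≠ 1) : lamCirc i = 0 := by
  fin_cases i <;> first | rfl | simp_all

lemma card_filter_sign (s : Fin 8 → ℚ) (hs : ∀ i, s i = 1 ∨ s i = -1) :
    ((Finset.univ.filter (fun i => s i = -1)).card : ℚ) = (8 - ∑ i, s i) / 2 := by
  have h1 : ∀ i : Fin 8, s i = 1 - 2 * (if s i = -1 then (1:ℚ) else 0) := by
    intro i; rcases hs i with h | h <;> rw [h] <;> norm_num
  have h2 : ∑ i, s i = 8 - 2 * ((Finset.univ.filter (fun i => s i = -1)).card : ℚ) := by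
    calc ∑ i, s i = ∑ i, (1 - 2 * (if s i = -1 then (1:ℚ) else 0)) :=
          Finset.sum_congr rfl (fun i _ => h1 i)
    _ = 8 - 2 * ∑ i : Fin 8, (if s i = -1 then (1:ℚ) else 0) := by
          rw [Finset.sum_sub_distrib, ← Finset.mul_sum]; simp
    _ = 8 - 2 * ((Finset.univ.filter (fun i => s i = -1)).card : ℚ) := by
          rw [Finset.sum_boole]
  linarith

lemma even_of_cast (n : ℕ) (z : ℤ) (h : (n:ℚ) = 2 * z) : Even n := by
  have h' : (n:ℤ) = 2 * z := by exact_mod_cast h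
  rw [Nat.even_iff]
  omega

lemma Acore (l2 : V 8) (h : ∀ i, l2 i = 1/2 ∨ l2 i = -(1/2)) (h0 : l2 0 = 1/2)
    (h1 : l2 1 = 1/2) (m2 : ℤ) (hsum : ∑ i, l2 i = 2 * m2) :
    ∃ g ∈ weylGroup e8roots, lamCirc = g.val l2 := by
  set β : V 8 := l2 - lamCirc with hβdef
  have hβv : ∀ i, β i = l2 i - lamCirc i := fun i => rfl
  set s : Fin 8 → ℚ := fun i => 2 * β i with hsdef
  have hs : ∀ i, s i = 1 ∨ s i = -1 := by
    intro i
    rcases eq_or_ne i 0 with rfl | hi0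
    · right; show 2 * (l2 0 - lamCirc 0) = -1; rw [h0, lamCirc_0]; norm_num
    · rcases eq_or_ne i 1 with rfl | hi1
      · right; show 2 * (l2 1 - lamCirc 1) = -1; rw [h1, lamCirc_1]; norm_num
      · have hl0 : lamCirc i = 0 := lamCirc_other hi0 hi1
        rcases h i with h' | h'
        · left; show 2 * (l2 i - lamCirc i) = 1; rw [h', hl0]; norm_num
        · right; show 2 * (l2 i - lamCirc i) = -1; rw [h', hl0]; norm_num
  have hsum_s : ∑ i, s i = 4 * (m2 : ℚ) - 4 := by
    have hl : ∑ i, lamCirc i = 2 := by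
      rw [Fin.sum_univ_eight, lamCirc_0, lamCirc_1, show lamCirc 2 = 0 from rfl,
        show lamCirc 3 = 0 from rfl, show lamCirc 4 = 0 from rfl,
        show lamCirc 5 = 0 from rfl, show lamCirc 6 = 0 from rfl,
        show lamCirc 7 = 0 from rfl]
      norm_num
    have : ∑ i, s i = 2 * (∑ i, l2 i) - 2 * (∑ i, lamCirc i) := by
      rw [Finset.mul_sum, Finset.mul_sum, ← Finset.sum_sub_distrib]
      exact Finset.sum_congr rfl (fun i _ => by show 2 * β i = _; rw [hβv]; ring)
    rw [this, hsum, hl]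
    ring
  have hβroot : β ∈ e8roots := by
    right
    refine ⟨s, hs, ?_, ?_⟩
    · apply even_of_cast _ (3 - m2)
      rw [card_filter_sign s hs, hsum_s]
      push_cast
      ring
    · funext k
      rw [Pi.smul_apply, hsdef]
      simp only [smul_eq_mul]
      ring
  have hq : ∀ i, β i * β i = 1/4 := by
    intro i
    rcases hs i with h' | h' <;> rw [hsdef] at h' <;> simp only at h'
    · have hb : β i = 1/2 := by linarith
      rw [hb]; norm_num
    · have hb : β i = -(1/2) := by linarith
      rw [hb]; norm_num
  have hdd : dot β β = 2 := by
    rw [dot, Fin.sum_univ_eight, hq 0, hq 1, hq 2, hq 3, hq 4, hq 5, hq 6, hq 7]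
    norm_num
  have hdl : dot β l2 = 1 := by
    have hql : ∀ i, l2 i * l2 i = 1/4 := by
      intro i; rcases h i with h' | h' <;> rw [h'] <;> norm_num
    have hterm : ∀ i, β i * l2 i = l2 i * l2 i - lamCirc i * l2 i := by
      intro i; rw [hβv]; ring
    rw [dot, Fin.sum_univ_eight, hterm 0, hterm 1, hterm 2, hterm 3, hterm 4,
      hterm 5, hterm 6, hterm 7, hql 0, hql 1, hql 2, hql 3, hql 4, hql 5, hql 6, hql 7,
      h0, h1, lamCirc_0, lamCirc_1,
      lamCirc_other (show (2:Fin 8) ≠ 0 by decide) (show (2:Fin 8) ≠ 1 by decide),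
      lamCirc_other (show (3:Fin 8) ≠ 0 by decide) (show (3:Fin 8) ≠ 1 by decide),
      lamCirc_other (show (4:Fin 8) ≠ 0 by decide) (show (4:Fin 8) ≠ 1 by decide),
      lamCirc_other (show (5:Fin 8) ≠ 0 by decide) (show (5:Fin 8) ≠ 1 by decide),
      lamCirc_other (show (6:Fin 8) ≠ 0 by decide) (show (6:Fin 8) ≠ 1 by decide),
      lamCirc_other (show (7:Fin 8) ≠ 0 by decide) (show (7:Fin 8) ≠ 1 by decide)]
    norm_num
  have hddne : dot β β ≠ 0 := by rw [hdd]; norm_num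
  refine ⟨reflUnit β hddne, reflUnit_mem hddne hβroot, ?_⟩
  show lamCirc = reflLin β l2
  rw [reflLin_apply, hdl, hdd]
  norm_num
  rw [hβdef, sub_sub_cancel]


-- ===== more helpers =====

lemma sum_flip {i j : Fin 8} (hij : i ≠ j) (x : V 8) :
    ∑ kk, ((flipU i j hij).val x) kk = (∑ kk, x kk) - 2 * x i - 2 * x j := by
  have hpt : ∀ kk, ((flipU i j hij).val x) kk
      = x kk + ((if kk = i then -(2 * x i) else 0) + (if kk = j then -(2 * x j) else 0)) := by
    intro kk
    rw [flipU_apply hij]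
    rcases eq_or_ne kk i with rfl | hki
    · rw [if_pos rfl, if_pos rfl, if_neg hij]; ring
    · rw [if_neg hki, if_neg hki]
      rcases eq_or_ne kk j with rfl | hkj
      · rw [if_pos rfl, if_pos rfl]; ring
      · rw [if_neg hkj, if_neg hkj]; ring
  rw [Finset.sum_congr rfl (fun kk _ => hpt kk), Finset.sum_add_distrib,
    Finset.sum_add_distrib, Finset.sum_ite_eq' Finset.univ i (fun _ => -(2 * x i)),
    Finset.sum_ite_eq' Finset.univ j (fun _ => -(2 * x j))]
  simp only [Finset.mem_univ, if_pos]
  ring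

lemma flip_half {i j : Fin 8} (hij : i ≠ j) (x : V 8)
    (h : ∀ kk, x kk = 1/2 ∨ x kk = -(1/2)) :
    ∀ kk, ((flipU i j hij).val x) kk = 1/2 ∨ ((flipU i j hij).val x) kk = -(1/2) := by
  intro kk
  rw [flipU_apply hij]
  split_ifs with h1 h2
  · rcases h i with a | a
    · right; rw [a]
    · left; rw [a]; norm_num
  · rcases h j with a | a
    · right; rw [a]
    · left; rw [a]; norm_num
  · exact h kk

lemma move_to_front (l : V 8) (i0 j0 : Fin 8) (hij : i0 ≠ j0) (x : V 8)
    (hx : x ∈ weylOrbit e8roots l) :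
    ∃ y ∈ weylOrbit e8roots l, y 0 = x i0 ∧ y 1 = x j0 := by
  rcases eq_or_ne i0 0 with rfl | hi0
  · rcases eq_or_ne j0 1 with rfl | hj1
    · exact ⟨x, hx, rfl, rfl⟩
    · have hj0 : j0 ≠ 0 := fun h => hij h.symm
      have h1j : (1 : Fin 8) ≠ j0 := fun h => hj1 h.symm
      refine ⟨(swapU 1 j0 h1j).val x, orbit_smul (swapU_mem h1j) hx, ?_, ?_⟩
      · rw [swapU_apply h1j, if_neg (by decide : (0:Fin 8) ≠ 1), if_neg (Ne.symm hj0)]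
      · rw [swapU_apply h1j, if_pos rfl]
  · have h0i : (0 : Fin 8) ≠ i0 := Ne.symm hi0
    rcases eq_or_ne j0 0 with rfl | hj0
    · rcases eq_or_ne i0 1 with rfl | hi1
      · refine ⟨(swapU 0 1 (by decide)).val x, orbit_smul (swapU_mem (by decide)) hx, ?_, ?_⟩
        · rw [swapU_apply (by decide : (0:Fin 8) ≠ 1), if_pos rfl]
        · rw [swapU_apply (by decide : (0:Fin 8) ≠ 1), if_neg (by decide : (1:Fin 8) ≠ 0),
            if_pos rfl]
      · have h1i : (1 : Fin 8) ≠ i0 := Ne.symm hi1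
        set y1 := (swapU 0 i0 h0i).val x with hy1
        have hy1mem : y1 ∈ weylOrbit e8roots l := orbit_smul (swapU_mem h0i) hx
        refine ⟨(swapU 1 i0 h1i).val y1, orbit_smul (swapU_mem h1i) hy1mem, ?_, ?_⟩
        · rw [swapU_apply h1i, if_neg (by decide : (0:Fin 8) ≠ 1), if_neg h0i, hy1,
            swapU_apply h0i, if_pos rfl]
        · rw [swapU_apply h1i, if_pos rfl, hy1, swapU_apply h0i, if_neg h0i.symm, if_pos rfl]
    · rcases eq_or_ne j0 1 with rfl | hj1
      · refine ⟨(swapU 0 i0 h0i).val x, orbit_smul (swapU_mem h0i) hx, ?_, ?_⟩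
        · rw [swapU_apply h0i, if_pos rfl]
        · rw [swapU_apply h0i, if_neg (by decide : (1:Fin 8) ≠ 0), if_neg (Ne.symm hij)]
      · have h1j : (1 : Fin 8) ≠ j0 := Ne.symm hj1
        set y1 := (swapU 0 i0 h0i).val x with hy1
        have hy1mem : y1 ∈ weylOrbit e8roots l := orbit_smul (swapU_mem h0i) hx
        refine ⟨(swapU 1 j0 h1j).val y1, orbit_smul (swapU_mem h1j) hy1mem, ?_, ?_⟩
        · rw [swapU_apply h1j, if_neg (by decide : (0:Fin 8) ≠ 1), if_neg (Ne.symm hj0), hy1,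
            swapU_apply h0i, if_pos rfl]
        · rw [swapU_apply h1j, if_pos rfl, hy1, swapU_apply h0i, if_neg hj0,
            if_neg (Ne.symm hij)]


lemma c_bound (a b : ℚ) (ha : 3/2 ≤ |a|) (hb : 1/2 ≤ |b|) (hab : 0 ≤ a * b) :
    1 ≤ |(a + b) / 2| := by
  rcases le_or_gt 0 a with h | h
  · have ha' : 3/2 ≤ a := by rcases abs_cases a with ⟨e, _⟩ | ⟨e, _⟩ <;> linarith
    have hb' : 0 ≤ b := by
      by_contra hcon
      push_neg at hcon
      nlinarith
    have hb'' : 1/2 ≤ b := by rcases abs_cases b with ⟨e, _⟩ | ⟨e, _⟩ <;> linarith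
    have : 1 ≤ (a + b) / 2 := by linarith
    linarith [le_abs_self ((a + b) / 2)]
  · have ha' : a ≤ -(3/2) := by rcases abs_cases a with ⟨e, _⟩ | ⟨e, _⟩ <;> linarith
    have hb' : b ≤ 0 := by
      by_contra hcon
      push_neg at hcon
      nlinarith
    have hb'' : b ≤ -(1/2) := by rcases abs_cases b with ⟨e, _⟩ | ⟨e, _⟩ <;> linarith
    have : (a + b) / 2 ≤ -1 := by linarith
    linarith [neg_le_abs ((a + b) / 2)]


/-- For every `λ ∈ Λ₁`, the weight `λ° = ε₁ + ε₂` belongs to `M_{E₈}(λ)`. -/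
theorem e8_lamCirc_mem_of_halfinteger (l : V 8) (hl : l ∈ LambdaOne) :
    lamCirc ∈ Mset e8roots l := by
  obtain ⟨w, ⟨hwint, m, hwsum⟩, rfl⟩ := hl
  choose k hk using hwint
  set L : V 8 := w + fun _ => (1/2 : ℚ) with hLdef
  have hli : ∀ i, L i = (k i : ℚ) + 1/2 := by
    intro i
    rw [hLdef, Pi.add_apply, hk i]
  have hlsum : ∑ i, L i = 2 * (m : ℚ) + 4 := by
    rw [hLdef]
    simp only [Pi.add_apply]
    rw [Finset.sum_add_distrib, hwsum, Finset.sum_const]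
    simp
    norm_num
  have hkZsum : ∑ i, k i = 2 * m := by
    have : (∑ i, (k i : ℚ)) = 2 * (m : ℚ) := by
      rw [Finset.sum_congr rfl fun i _ => (hk i).symm, hwsum]
    exact_mod_cast this
  constructor
  · -- lattice part
    set nI : Fin 8 → ℤ := fun i => (if i = 0 ∨ i = 1 then 1 else 0) - k i with hnI
    have hnIsum : ∑ i, nI i = 2 * (1 - m) := by
      rw [hnI, Finset.sum_sub_distrib, hkZsum, Fin.sum_univ_eight]
      simp (config := { decide := true })
      ring
    have hspan := int_even_mem_span nI (1 - m) hnIsum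
    have heq : lamCirc - L = (fun i => (nI i : ℚ)) - (fun _ => (1/2 : ℚ)) := by
      funext kk
      simp only [Pi.sub_apply]
      rw [hnI]
      simp only
      rw [Int.cast_sub, apply_ite (fun z : ℤ => (z : ℚ))]
      simp only [Int.cast_one, Int.cast_zero]
      rcases eq_or_ne kk 0 with rfl | h0
      · rw [lamCirc_0, if_pos (Or.inl rfl), hli 0]; ring
      · rcases eq_or_ne kk 1 with rfl | h1
        · rw [lamCirc_1, if_pos (Or.inr rfl), hli 1]; ring
        · rw [lamCirc_other h0 h1, if_neg (by simp [h0, h1]), hli kk]; ring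
    show lamCirc - L ∈ Submodule.span ℤ e8roots
    rw [heq]
    exact Submodule.sub_mem _ hspan (Submodule.subset_span half_root)
  · -- polytope part
    show lamCirc ∈ convexHull ℚ (weylOrbit e8roots L)
    by_cases hA : ∀ i : Fin 8, L i = 1/2 ∨ L i = -(1/2)
    · -- case A : half-root
      have hfind : L 0 = -(1/2) ∨ L 1 = -(1/2) →
          (L 0 = 1/2 ∨ L 1 = 1/2) → ∃ j : Fin 8, j ≠ 0 ∧ j ≠ 1 ∧ L j = -(1/2) := by
        intro hneg hpos
        by_contra hcon
        push_neg at hcon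
        have hv : ∀ j : Fin 8, j ≠ 0 → j ≠ 1 → L j = 1/2 := by
          intro j a b
          rcases hA j with h | h
          · exact h
          · exact absurd h (hcon j a b)
        have h2 := hv 2 (by decide) (by decide)
        have h3 := hv 3 (by decide) (by decide)
        have h4 := hv 4 (by decide) (by decide)
        have h5 := hv 5 (by decide) (by decide)
        have h6 := hv 6 (by decide) (by decide)
        have h7 := hv 7 (by decide) (by decide)
        rw [Fin.sum_univ_eight, h2, h3, h4, h5, h6, h7] at hlsum
        have h01sum : L 0 + L 1 = 0 := by
          rcases hneg with ha | ha
          · rcases hpos with hb | hb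
            · rw [ha] at hb; norm_num at hb
            · rw [ha, hb]; ring
          · rcases hpos with hb | hb
            · rw [ha, hb]; ring
            · rw [ha] at hb; norm_num at hb
        have hmq : 2 * (m:ℚ) = -1 := by linarith
        have hmz : 2 * m = -1 := by exact_mod_cast hmq
        omega
      rcases hA 0 with h0 | h0 <;> rcases hA 1 with h1 | h1
      · -- (+,+)
        obtain ⟨g2, hg2, hlc⟩ := Acore L hA h0 h1 (m + 2)
          (by rw [hlsum]; push_cast; ring)
        exact subset_convexHull ℚ _ ⟨g2, hg2, hlc⟩
      · -- (+,-)
        obtain ⟨j, hj0, hj1, hjv⟩ := hfind (Or.inr h1) (Or.inl h0)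
        have h1j : (1 : Fin 8) ≠ j := Ne.symm hj1
        set L2 : V 8 := (flipU 1 j h1j).val L with hL2
        have hL2_0 : L2 0 = 1/2 := by
          rw [hL2, flipU_apply h1j, if_neg (by decide : (0:Fin 8) ≠ 1),
            if_neg (Ne.symm hj0), h0]
        have hL2_1 : L2 1 = 1/2 := by
          rw [hL2, flipU_apply h1j, if_pos rfl, h1]; norm_num
        obtain ⟨g2, hg2, hlc⟩ := Acore L2 (flip_half h1j L hA) hL2_0 hL2_1 (m + 3)
          (by rw [hL2, sum_flip h1j L, hlsum, h1, hjv]; push_cast; ring)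
        refine subset_convexHull ℚ _ ⟨g2 * flipU 1 j h1j,
          mul_mem hg2 (flipU_mem h1j), ?_⟩
        rw [Units.val_mul, Module.End.mul_apply, ← hL2]
        exact hlc
      · -- (-,+)
        obtain ⟨j, hj0, hj1, hjv⟩ := hfind (Or.inl h0) (Or.inr h1)
        have h0j : (0 : Fin 8) ≠ j := Ne.symm hj0
        set L2 : V 8 := (flipU 0 j h0j).val L with hL2
        have hL2_0 : L2 0 = 1/2 := by
          rw [hL2, flipU_apply h0j, if_pos rfl, h0]; norm_num
        have hL2_1 : L2 1 = 1/2 := by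
          rw [hL2, flipU_apply h0j, if_neg (by decide : (1:Fin 8) ≠ 0),
            if_neg (Ne.symm hj1), h1]
        obtain ⟨g2, hg2, hlc⟩ := Acore L2 (flip_half h0j L hA) hL2_0 hL2_1 (m + 3)
          (by rw [hL2, sum_flip h0j L, hlsum, h0, hjv]; push_cast; ring)
        refine subset_convexHull ℚ _ ⟨g2 * flipU 0 j h0j,
          mul_mem hg2 (flipU_mem h0j), ?_⟩
        rw [Units.val_mul, Module.End.mul_apply, ← hL2]
        exact hlc
      · -- (-,-)
        have h01 : (0 : Fin 8) ≠ 1 := by decide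
        set L2 : V 8 := (flipU 0 1 h01).val L with hL2
        have hL2_0 : L2 0 = 1/2 := by
          rw [hL2, flipU_apply h01, if_pos rfl, h0]; norm_num
        have hL2_1 : L2 1 = 1/2 := by
          rw [hL2, flipU_apply h01, if_neg (by decide : (1:Fin 8) ≠ 0), if_pos rfl, h1]
          norm_num
        obtain ⟨g2, hg2, hlc⟩ := Acore L2 (flip_half h01 L hA) hL2_0 hL2_1 (m + 3)
          (by rw [hL2, sum_flip h01 L, hlsum, h0, h1]; push_cast; ring)
        refine subset_convexHull ℚ _ ⟨g2 * flipU 0 1 h01,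
          mul_mem hg2 (flipU_mem h01), ?_⟩
        rw [Units.val_mul, Module.End.mul_apply, ← hL2]
        exact hlc
    · -- case B : some big coordinate
      push_neg at hA
      obtain ⟨i0, hi01, hi02⟩ := hA
      have hk32 : 1 ≤ k i0 ∨ k i0 ≤ -2 := by
        have ne1 : k i0 ≠ 0 := by
          intro h
          apply hi01
          rw [hli i0, h]
          norm_num
        have ne2 : k i0 ≠ -1 := by
          intro h
          apply hi02
          rw [hli i0, h]
          norm_num
        omega
      have habs0 : 3/2 ≤ |L i0| := by
        rcases hk32 with h | h
        · have h' : (1:ℚ) ≤ k i0 := by exact_mod_cast h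
          have : 3/2 ≤ L i0 := by rw [hli i0]; linarith
          linarith [le_abs_self (L i0)]
        · have h' : (k i0 : ℚ) ≤ -2 := by exact_mod_cast h
          have : L i0 ≤ -(3/2) := by rw [hli i0]; linarith
          linarith [neg_le_abs (L i0)]
      have hhalf : ∀ jj : Fin 8, 1/2 ≤ |L jj| := by
        intro jj
        rcases le_or_gt 0 (k jj) with hh | hh
        · have h' : (0:ℚ) ≤ k jj := by exact_mod_cast hh
          have : 1/2 ≤ L jj := by rw [hli jj]; linarith
          linarith [le_abs_self (L jj)]
        · have hh' : k jj ≤ -1 := by omega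
          have h' : (k jj : ℚ) ≤ -1 := by exact_mod_cast hh'
          have : L jj ≤ -(1/2) := by rw [hli jj]; linarith
          linarith [neg_le_abs (L jj)]
      have hij0 : ∃ j0 : Fin 8, i0 ≠ j0 := by
        rcases eq_or_ne i0 0 with rfl | h
        · exact ⟨1, by decide⟩
        · exact ⟨0, h⟩
      obtain ⟨j0, hij⟩ := hij0
      obtain ⟨y, hymem, hy0, hy1⟩ := move_to_front L i0 j0 hij L (orbit_self _ _)
      have habs0' : 3/2 ≤ |y 0| := by rw [hy0]; exact habs0
      have habs1' : 1/2 ≤ |y 1| := by rw [hy1]; exact hhalf j0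
      rcases le_or_gt 0 (y 0 * y 1) with hsgn | hsgn
      · exact Bcore L ((y 0 + y 1) / 2) y (subset_convexHull ℚ _ hymem) (by ring)
          (c_bound _ _ habs0' habs1' hsgn)
      · have h12 : (1 : Fin 8) ≠ 2 := by decide
        set x : V 8 := (flipU 1 2 h12).val y with hx
        have hxmem : x ∈ weylOrbit e8roots L := orbit_smul (flipU_mem h12) hymem
        have hx0 : x 0 = y 0 := by
          rw [hx, flipU_apply h12, if_neg (by decide : (0:Fin 8) ≠ 1),
            if_neg (by decide : (0:Fin 8) ≠ 2)]
        have hx1 : x 1 = -y 1 := by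
          rw [hx, flipU_apply h12, if_pos rfl]
        have habs0'' : 3/2 ≤ |x 0| := by rw [hx0]; exact habs0'
        have habs1'' : 1/2 ≤ |x 1| := by rw [hx1, abs_neg]; exact habs1'
        have hsgn' : 0 ≤ x 0 * x 1 := by
          rw [hx0, hx1]
          nlinarith
        exact Bcore L ((x 0 + x 1) / 2) x (subset_convexHull ℚ _ hxmem) (by ring)
          (c_bound _ _ habs0'' habs1'' hsgn')


end TorusNormal
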